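/- arXiv:2310.01618 — 3 statements merged into one kernel-verified Lean document; each statement's English description precedes it below -/
import Mathlib

section
/- Let H be a real normed lattice additive group, let s be a nonempty finite index set, and let a, b : s → H be finite families. Then ‖(sup'_{i ∈ s} a_i) − (sup'_{i ∈ s} b_i)‖ ≤ Σ_{i ∈ s} ‖a_i − b_i‖, where sup' denotes the supremum (join) of the nonempty finite family in the lattice H. -/
/-- In a normed lattice additive group H, for nonempty finite
families a, b : s → H one has
‖sup'_{i∈s} a_i − sup'_{i∈s} b_i‖ ≤ Σ_{i∈s} ‖a_i − b_i‖. -/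
theorem stmt_10 {H : Type*} [NormedAddCommGroup H] [Lattice H] [HasSolidNorm H]
    [IsOrderedAddMonoid H] {ι : Type*}
    (s : Finset ι) (hs : s.Nonempty) (a b : ι → H) :
    ‖s.sup' hs a - s.sup' hs b‖ ≤ ∑ i ∈ s, ‖a i - b i‖ := by
  induction hs using Finset.Nonempty.cons_induction with
  | singleton i => simp
  | cons i t hi ht ih =>
    rw [Finset.sup'_cons ht, Finset.sup'_cons ht, Finset.sum_cons]
    exact (norm_sup_sub_sup_le_add_norm _ _ _ _).trans (by gcongr)
end

section
/- Let V be a nonempty finite set of vertices, let N : V → Finset V assign to each vertex a nonempty neighborhood, let H be the real Lebesgue space L²([-1,1]) (with its lattice structure), and let W : H →L[ℝ] H be a continuous linear map with operator norm at most L. For f : V → H define the GNN aggregation operator T(f)(v) = sup'_{u ∈ N(v)} (W (f u))⁺. Then for all f, g : V → H, Σ_{v ∈ V} ‖T(f)(v) − T(g)(v)‖ ≤ L · Σ_{u ∈ V} c_u · ‖f(u) − g(u)‖, where c_u = |{v ∈ V : u ∈ N(v)}| is the number of neighborhoods containing u. -/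
/-!
Each aggregation step is Lipschitz: in a normed lattice `a ↦ a⁺` and `(a, b) ↦ a ⊔ b` are
1-Lipschitz, so the supremum over a neighbourhood moves by at most the sum of the movements of
its terms, and `W` scales each of those by at most `‖W‖ ≤ L`. Summing over the vertices, the
term of `u` is counted once for every neighbourhood containing it, which gives the weights `c u`.
-/

open MeasureTheory

/-- The Hilbert lattice H = L²([-1,1]) of real square-integrable functions. -/
noncomputable abbrev GNNFeatureSpace : Type :=
  MeasureTheory.Lp ℝ 2 ((MeasureTheory.volume : Measure ℝ).restrict (Set.Icc (-1 : ℝ) 1))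

section NormedLattice

variable {E F : Type*} [NormedAddCommGroup E] [NormedAddCommGroup F] [Lattice F]
  [HasSolidNorm F] [IsOrderedAddMonoid F]

lemma Finset.norm_sup'_sub_sup'_le_sum {ι : Type*} (s : Finset ι) (hs : s.Nonempty)
    (a b : ι → F) : ‖s.sup' hs a - s.sup' hs b‖ ≤ ∑ i ∈ s, ‖a i - b i‖ := by
  induction hs using Finset.Nonempty.cons_induction with
  | singleton i => simp
  | cons i s hi hs ih =>
      rw [Finset.sup'_cons hs, Finset.sup'_cons hs, Finset.sum_cons]
      exact (norm_sup_sub_sup_le_add_norm _ _ _ _).trans (by gcongr)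

lemma norm_posPart_map_sub_posPart_map_le [NormedSpace ℝ E] [NormedSpace ℝ F]
    (W : E →L[ℝ] F) {L : ℝ} (hW : ‖W‖ ≤ L) (x y : E) :
    ‖(W x)⁺ - (W y)⁺‖ ≤ L * ‖x - y‖ :=
  calc ‖(W x)⁺ - (W y)⁺‖ ≤ ‖W x - W y‖ := norm_sup_sub_sup_le_norm _ _ _
    _ = ‖W (x - y)‖ := by rw [map_sub]
    _ ≤ ‖W‖ * ‖x - y‖ := W.le_opNorm _
    _ ≤ L * ‖x - y‖ := by gcongr

end NormedLattice

lemma Finset.sum_sum_mem_eq_sum_card_nsmul {V M : Type*} [Fintype V] [DecidableEq V]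
    [AddCommMonoid M] (N : V → Finset V) (x : V → M) :
    ∑ v, ∑ u ∈ N v, x u = ∑ u, (Finset.univ.filter fun v => u ∈ N v).card • x u := by
  rw [Finset.sum_comm' (t' := Finset.univ) (s' := fun u => {v | u ∈ N v}) (by simp)]
  simp only [Finset.sum_const]

theorem stmt_11_general {V : Type*} [Fintype V] [DecidableEq V]
    (N : V → Finset V) (hN : ∀ v : V, (N v).Nonempty)
    (W : GNNFeatureSpace →L[ℝ] GNNFeatureSpace) (L : ℝ) (hW : ‖W‖ ≤ L)
    (T : (V → GNNFeatureSpace) → V → GNNFeatureSpace)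
    (hT : ∀ f v, T f v = (N v).sup' (hN v) fun u => (W (f u))⁺)
    (c : V → ℕ) (hc : ∀ u : V, c u = (Finset.univ.filter fun v => u ∈ N v).card)
    (f g : V → GNNFeatureSpace) :
    ∑ v : V, ‖T f v - T g v‖ ≤ L * ∑ u : V, (c u : ℝ) * ‖f u - g u‖ := by
  have vertex_bound : ∀ v, ‖T f v - T g v‖ ≤ ∑ u ∈ N v, L * ‖f u - g u‖ := fun v => by
    rw [hT, hT]
    exact (Finset.norm_sup'_sub_sup'_le_sum _ _ _ _).trans
      (Finset.sum_le_sum fun u _ => norm_posPart_map_sub_posPart_map_le W hW _ _)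
  calc ∑ v, ‖T f v - T g v‖ ≤ ∑ v, ∑ u ∈ N v, L * ‖f u - g u‖ :=
        Finset.sum_le_sum fun v _ => vertex_bound v
    _ = L * ∑ u, (c u : ℝ) * ‖f u - g u‖ := by
        rw [Finset.sum_sum_mem_eq_sum_card_nsmul, Finset.mul_sum]
        refine Finset.sum_congr rfl fun u _ => ?_
        rw [nsmul_eq_mul, hc]
        ring

/-- For the GNN aggregation operator
T(f)(v) = sup'_{u ∈ N(v)} (W (f u))⁺ on families of features in H = L²([-1,1]),
with W a continuous linear map of operator norm at most L,
Σ_v ‖T(f)(v) − T(g)(v)‖ ≤ L · Σ_u c_u ‖f(u) − g(u)‖, where c_u is the number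
of neighborhoods containing u. -/
theorem stmt_11 {V : Type*} [Fintype V] [Nonempty V] [DecidableEq V]
    (N : V → Finset V) (hN : ∀ v : V, (N v).Nonempty)
    (W : GNNFeatureSpace →L[ℝ] GNNFeatureSpace) (L : ℝ) (hW : ‖W‖ ≤ L)
    (T : (V → GNNFeatureSpace) → V → GNNFeatureSpace)
    (hT : ∀ f v, T f v = (N v).sup' (hN v) fun u => (W (f u))⁺)
    (c : V → ℕ) (hc : ∀ u : V, c u = (Finset.univ.filter fun v => u ∈ N v).card)
    (f g : V → GNNFeatureSpace) :
    ∑ v : V, ‖T f v - T g v‖ ≤ L * ∑ u : V, (c u : ℝ) * ‖f u - g u‖ :=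
  stmt_11_general N hN W L hW T hT c hc f g
end

section
/- Let V be a nonempty finite set of vertices, let N : V → Finset V assign to each vertex a nonempty neighborhood, let H be the real Lebesgue space L²([-1,1]), and let W : H →L[ℝ] H have operator norm at most L. Define T(f)(v) = sup'_{u ∈ N(v)} (W (f u))⁺ for f : V → H, and let α = max_{u ∈ V} |{v ∈ V : u ∈ N(v)}|. If L·α < 1, then for every f : V → H the fixed point problem T(y) + f = y has a unique solution y : V → H, and the Picard iterates y₀ = f, y_{n+1} = T(y_n) + f converge to this solution in the norm ‖g‖ = Σ_{v ∈ V} ‖g(v)‖ on the product space. -/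
/-!
Each aggregation `(N v).sup' (fun u => (W (f u))⁺)` moves by at most `Σ_{u ∈ N v} L ‖f u - g u‖`
when `f` is replaced by `g`, because a finite supremum and the positive part are `1`-Lipschitz in a
normed lattice. Summing over `v`, each `u` is counted once for every `v` with `u ∈ N v`, at most `α`
times, so `y ↦ T y + f` is an `L α`-contraction for the `ℓ¹` distance on `V → H`, and Banach's
fixed point theorem applies.
-/

open MeasureTheory Filter Topology Finset

section NormedLattice

variable {E : Type*} [NormedAddCommGroup E] [Lattice E] [HasSolidNorm E] [IsOrderedAddMonoid E]

theorem Finset.norm_sup'_sub_sup'_le {ι : Type*} {s : Finset ι} (hs : s.Nonempty) (F G : ι → E) :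
    ‖s.sup' hs F - s.sup' hs G‖ ≤ ∑ i ∈ s, ‖F i - G i‖ := by
  induction hs using Finset.Nonempty.cons_induction with
  | singleton i => simp
  | cons i s hi hs ih =>
    rw [sup'_cons hs, sup'_cons hs, sum_cons]
    exact (norm_sup_sub_sup_le_add_norm _ _ _ _).trans (by gcongr)

theorem norm_posPart_sub_posPart_le (a b : E) : ‖a⁺ - b⁺‖ ≤ ‖a - b‖ := by
  simpa only [posPart_def] using norm_sup_sub_sup_le_norm a b 0

end NormedLattice

theorem Finset.sum_sum_mem_le_mul_sum {V : Type*} [Fintype V] [DecidableEq V] (N : V → Finset V)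
    {α : ℕ} (hα : ∀ u, #{v | u ∈ N v} ≤ α) {c : V → ℝ} (hc : ∀ u, 0 ≤ c u) :
    ∑ v, ∑ u ∈ N v, c u ≤ α * ∑ u, c u := by
  calc ∑ v, ∑ u ∈ N v, c u = ∑ u, ∑ v with u ∈ N v, c u :=
        sum_comm' fun v u => by simp
    _ = ∑ u, (#{v | u ∈ N v} : ℝ) * c u := by simp only [sum_const, nsmul_eq_mul]
    _ ≤ ∑ u, (α : ℝ) * c u :=
        sum_le_sum fun u _ => mul_le_mul_of_nonneg_right (mod_cast hα u) (hc u)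
    _ = α * ∑ u, c u := (mul_sum ..).symm

theorem sum_norm_sup'_sub_sup'_le {V E F : Type*} [Fintype V] [DecidableEq V]
    [SeminormedAddCommGroup E] [NormedAddCommGroup F] [Lattice F] [HasSolidNorm F]
    [IsOrderedAddMonoid F] (N : V → Finset V) (hN : ∀ v, (N v).Nonempty)
    {α : ℕ} (hα : ∀ u, #{v | u ∈ N v} ≤ α) {φ : E → F} {K : ℝ}
    (hφ : ∀ a b, ‖φ a - φ b‖ ≤ K * ‖a - b‖) (g h : V → E) :
    ∑ v, ‖(N v).sup' (hN v) (fun u => φ (g u)) - (N v).sup' (hN v) (fun u => φ (h u))‖ ≤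
      K * α * ∑ v, ‖g v - h v‖ := by
  calc _ ≤ ∑ v, ∑ u ∈ N v, ‖φ (g u) - φ (h u)‖ :=
        sum_le_sum fun v _ => norm_sup'_sub_sup'_le (hN v) _ _
    _ ≤ α * ∑ u, ‖φ (g u) - φ (h u)‖ := sum_sum_mem_le_mul_sum N hα fun _ => norm_nonneg _
    _ ≤ α * ∑ u, K * ‖g u - h u‖ := by gcongr with u; exact hφ _ _
    _ = K * α * ∑ v, ‖g v - h v‖ := by rw [← mul_sum]; ring

theorem PiLp.dist_eq_sum_dist_of_L1 {ι : Type*} [Fintype ι] {β : ι → Type*}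
    [∀ i, PseudoMetricSpace (β i)] (x y : PiLp 1 β) : dist x y = ∑ i, dist (x i) (y i) := by
  rw [PiLp.dist_eq_sum (by simp)]
  simp

theorem exists_fixedPoint_of_sum_dist_le {V E : Type*} [Fintype V] [MetricSpace E]
    [CompleteSpace E] [Nonempty E] {F : (V → E) → V → E} {K : ℝ} (hK : K < 1)
    (hF : ∀ g h, ∑ v, dist (F g v) (F h v) ≤ K * ∑ v, dist (g v) (h v)) :
    ∃ y, F y = y ∧ (∀ y', F y' = y' → y' = y) ∧
      ∀ x, Tendsto (fun n => ∑ v, dist (F^[n] x v) (y v)) atTop (𝓝 0) := by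
  let Φ : PiLp 1 (fun _ : V => E) → PiLp 1 (fun _ : V => E) := fun x => WithLp.toLp 1 (F x.ofLp)
  have hΦ : ContractingWith K.toNNReal Φ := by
    refine ⟨by simpa using hK, LipschitzWith.of_dist_le_mul fun g h => ?_⟩
    rw [PiLp.dist_eq_sum_dist_of_L1, PiLp.dist_eq_sum_dist_of_L1]
    exact (hF g h).trans <| mul_le_mul_of_nonneg_right (Real.le_coe_toNNReal K)
      (sum_nonneg fun _ _ => dist_nonneg)
  have hsemiconj : Function.Semiconj (WithLp.toLp 1) F Φ := fun _ => rfl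
  have hiter (n : ℕ) (x : V → E) : Φ^[n] (WithLp.toLp 1 x) = WithLp.toLp 1 (F^[n] x) :=
    (hsemiconj.iterate_right n x).symm
  have : Nonempty (PiLp 1 fun _ : V => E) := ⟨WithLp.toLp 1 fun _ => Classical.arbitrary E⟩
  refine ⟨(hΦ.fixedPoint Φ).ofLp, congrArg WithLp.ofLp hΦ.fixedPoint_isFixedPt,
    fun y' hy' => congrArg WithLp.ofLp (hΦ.fixedPoint_unique (congrArg (WithLp.toLp 1) hy')),
    fun x => ?_⟩
  have := tendsto_iff_dist_tendsto_zero.mp (hΦ.tendsto_iterate_fixedPoint (WithLp.toLp 1 x))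
  simpa only [hiter, PiLp.dist_eq_sum_dist_of_L1] using this

/-- For the GNN aggregation operator
T(f)(v) = sup'_{u ∈ N(v)} (W (f u))⁺ on families of features in H = L²([-1,1]),
with ‖W‖ ≤ L and α = max_u |{v : u ∈ N(v)}| satisfying L·α < 1, the fixed point
problem T(y) + f = y has a unique solution for every f, and the Picard iterates
y₀ = f, y_{n+1} = T(y_n) + f converge to it in the norm Σ_v ‖·(v)‖. -/
theorem stmt_12 {V : Type*} [Fintype V] [Nonempty V] [DecidableEq V]
    (N : V → Finset V) (hN : ∀ v : V, (N v).Nonempty)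
    (W : GNNFeatureSpace →L[ℝ] GNNFeatureSpace) (L : ℝ) (hW : ‖W‖ ≤ L)
    (T : (V → GNNFeatureSpace) → V → GNNFeatureSpace)
    (hT : ∀ f v, T f v = (N v).sup' (hN v) fun u => (W (f u))⁺)
    (α : ℕ)
    (hα : α = Finset.univ.sup' Finset.univ_nonempty
      fun u : V => (Finset.univ.filter fun v => u ∈ N v).card)
    (hcontr : L * (α : ℝ) < 1)
    (f : V → GNNFeatureSpace) :
    ∃ y : V → GNNFeatureSpace, (T y + f = y) ∧
      (∀ y' : V → GNNFeatureSpace, T y' + f = y' → y' = y) ∧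
      ∀ yseq : ℕ → V → GNNFeatureSpace,
        yseq 0 = f → (∀ n : ℕ, yseq (n + 1) = T (yseq n) + f) →
        Tendsto (fun n => ∑ v : V, ‖yseq n v - y v‖) atTop (nhds 0) := by
  have hdeg (u : V) : #{v | u ∈ N v} ≤ α :=
    hα ▸ le_sup' (fun u : V => #{v | u ∈ N v}) (mem_univ u)
  have hφ (a b : GNNFeatureSpace) : ‖(W a)⁺ - (W b)⁺‖ ≤ L * ‖a - b‖ :=
    (norm_posPart_sub_posPart_le _ _).trans (by rw [← map_sub]; exact W.le_of_opNorm_le hW _)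
  obtain ⟨y, hfix, huniq, hconv⟩ :=
    exists_fixedPoint_of_sum_dist_le (F := fun g => T g + f) hcontr fun g h => by
      simpa only [Pi.add_apply, dist_eq_norm, add_sub_add_right_eq_sub, hT]
        using sum_norm_sup'_sub_sup'_le N hN hdeg hφ g h
  refine ⟨y, hfix, huniq, fun yseq h0 hsucc => ?_⟩
  have hyseq (n : ℕ) : yseq n = (fun g => T g + f)^[n] f := by
    induction n with
    | zero => exact h0
    | succ n ih => rw [hsucc, ih, Function.iterate_succ_apply']
  simpa only [hyseq, dist_eq_norm] using hconv f
end
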